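/- arXiv:2202.08035 — 2 statements merged into one kernel-verified Lean document; each statement's English description precedes it below -/
import Mathlib

section
/- Let a_1, …, a_n be positive integers, let S := Σ_{i=1}^n a_i, let M := 2·S², let p_i := a_i/(S·M) and c_i := a_i for i ∈ [n], and let γ := (1 − ∏_{i=1}^n (1 − p_i))·S + S/M² − S/(4M). Suppose I ⊆ [n] satisfies Σ_{i∈I} a_i = S/2, and define b ∈ {0,1}^n by b_i = 1 ⟺ i ∈ I. Then B := {𝟎, b, 𝟙} is a Pareto cover of μ_p with E_{μ_p}[c_B] ≤ γ. -/
lemma wprod_ge {ι : Type*} (s : Finset ι) (q : ι → ℝ) (h0 : ∀ i ∈ s, 0 ≤ q i)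
    (h1 : ∀ i ∈ s, q i ≤ 1) :
    1 - ∑ i ∈ s, q i ≤ ∏ i ∈ s, (1 - q i) := by
  induction s using Finset.cons_induction with
  | empty => simp
  | cons a s ha ih =>
    rw [Finset.prod_cons, Finset.sum_cons]
    have h0a := h0 a (Finset.mem_cons_self a s)
    have h1a := h1 a (Finset.mem_cons_self a s)
    have ih' := ih (fun i hi => h0 i (Finset.mem_cons_of_mem hi))
      (fun i hi => h1 i (Finset.mem_cons_of_mem hi))
    have hsum : 0 ≤ ∑ i ∈ s, q i :=
      Finset.sum_nonneg (fun i hi => h0 i (Finset.mem_cons_of_mem hi))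
    nlinarith [mul_le_mul_of_nonneg_left ih' (by linarith : (0:ℝ) ≤ 1 - q a),
      mul_nonneg h0a hsum]

lemma wprod_le {ι : Type*} (s : Finset ι) (q : ι → ℝ) (h0 : ∀ i ∈ s, 0 ≤ q i)
    (h1 : ∀ i ∈ s, q i ≤ 1) :
    ∏ i ∈ s, (1 - q i) ≤ 1 - (∑ i ∈ s, q i) + (∑ i ∈ s, q i)^2/2 := by
  induction s using Finset.cons_induction with
  | empty => simp
  | cons a s ha ih =>
    rw [Finset.prod_cons, Finset.sum_cons]
    have h0a := h0 a (Finset.mem_cons_self a s)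
    have h1a := h1 a (Finset.mem_cons_self a s)
    have ih' := ih (fun i hi => h0 i (Finset.mem_cons_of_mem hi))
      (fun i hi => h1 i (Finset.mem_cons_of_mem hi))
    have hsum : 0 ≤ ∑ i ∈ s, q i :=
      Finset.sum_nonneg (fun i hi => h0 i (Finset.mem_cons_of_mem hi))
    nlinarith [mul_le_mul_of_nonneg_left ih' (by linarith : (0:ℝ) ≤ 1 - q a),
      mul_nonneg h0a (sq_nonneg (∑ i ∈ s, q i)), sq_nonneg (q a)]

lemma sum_prod_bool {n : ℕ} (g h : Fin n → ℝ) :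
    (∑ x : Fin n → Bool, ∏ i, (if x i then g i else h i)) = ∏ i, (g i + h i) := by
  have key := Fintype.prod_sum (fun (i : Fin n) (b : Bool) => if b then g i else h i)
  simp only [Fintype.sum_bool, if_true, if_false] at key
  rw [← key]
  exact Finset.prod_congr rfl (fun i _ => by norm_num)



/-- The weight `μ_p({x}) = ∏_{i : x_i = 1} p_i · ∏_{i : x_i = 0} (1 − p_i)` of a point
`x ∈ {0,1}^n` under the product Bernoulli measure `μ_p`. -/
noncomputable def bweight {n : ℕ} (p : Fin n → ℝ) (x : Fin n → Bool) : ℝ :=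
  ∏ i, if x i then p i else 1 - p i

/-- The cost `cᵀb` of a binary vector `b ∈ {0,1}^n`. -/
noncomputable def bcost {n : ℕ} (c : Fin n → ℝ) (b : Fin n → Bool) : ℝ :=
  ∑ i, if b i then c i else 0

/-- `c_B(x) = min { cᵀb : b ∈ B, x ≤ b }` (with the convention `sInf ∅ = 0`;
for a Pareto cover the uncovered points have measure zero). -/
noncomputable def bmin {n : ℕ} (c : Fin n → ℝ) (B : Finset (Fin n → Bool)) (x : Fin n → Bool) : ℝ :=
  sInf (bcost c '' {b | b ∈ B ∧ x ≤ b})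

/-- `E_{μ_p}[c_B] = Σ_{x ∈ {0,1}^n} μ_p({x}) · c_B(x)`. -/
noncomputable def bexp {n : ℕ} (p c : Fin n → ℝ) (B : Finset (Fin n → Bool)) : ℝ :=
  ∑ x : Fin n → Bool, bweight p x * bmin c B x

-- `B` is a Pareto cover of `μ_p`: the covered points have total measure `1`.
open Classical in
noncomputable def bcover {n : ℕ} (p : Fin n → ℝ) (B : Finset (Fin n → Bool)) : Prop :=
  (∑ x : Fin n → Bool, if ∃ b ∈ B, x ≤ b then bweight p x else 0) = 1

set_option maxHeartbeats 1000000 in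
open Classical in
theorem stmt10 {n : ℕ} (a : Fin n → ℕ) (ha : ∀ i, 0 < a i)
    (S M : ℕ) (hS : S = ∑ i, a i) (hM : M = 2 * S^2)
    (p c : Fin n → ℝ)
    (hp : ∀ i, p i = (a i : ℝ) / ((S : ℝ) * (M : ℝ))) (hc : ∀ i, c i = (a i : ℝ))
    (γ : ℝ)
    (hγ : γ = (1 - ∏ i, (1 - p i)) * (S : ℝ) + (S : ℝ) / (M : ℝ)^2 - (S : ℝ) / (4 * (M : ℝ)))
    (I : Finset (Fin n)) (hI : 2 * ∑ i ∈ I, a i = S)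
    (b : Fin n → Bool) (hb : ∀ i, b i = true ↔ i ∈ I)
    (B : Finset (Fin n → Bool))
    (hB : B = {(fun _ => false), b, (fun _ => true)}) :
    bcover p B ∧ bexp p c B ≤ γ := by
  classical
  have haSle : ∀ i, a i ≤ S := fun i => by
    rw [hS]; exact Finset.single_le_sum (f := fun i => a i) (fun _ _ => Nat.zero_le _)
      (Finset.mem_univ i)
  have hp0 : ∀ i, 0 ≤ p i := fun i => by rw [hp]; positivity
  have hp1 : ∀ i, p i ≤ 1 := by
    intro i
    have hS1 : 1 ≤ S := le_trans (ha i) (haSle i)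
    have hM2 : 2 ≤ M := by rw [hM]; nlinarith
    have hle : a i ≤ S * M := le_trans (haSle i) (Nat.le_mul_of_pos_right S (by omega))
    rw [hp i]
    have h2 : (a i : ℝ) ≤ (S : ℝ) * (M : ℝ) := by exact_mod_cast hle
    exact div_le_one_of_le₀ h2 (by positivity)
  have hw0x : ∀ x : Fin n → Bool, 0 ≤ bweight p x := by
    intro x
    apply Finset.prod_nonneg
    intro i _
    by_cases hxi : x i = true
    · simp [hxi, hp0 i]
    · simp [hxi]; linarith [hp1 i]
  -- the three elements of B
  have h0B : (fun _ => false) ∈ B := by simp [hB]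
  have hbB : b ∈ B := by simp [hB]
  have h1B : (fun _ => true) ∈ B := by simp [hB]
  have hcovall : ∀ x : Fin n → Bool, ∃ b' ∈ B, x ≤ b' := by
    intro x
    exact ⟨fun _ => true, h1B, fun i => Bool.le_true _⟩
  -- total weight is 1
  have hsum1 : (∑ x : Fin n → Bool, bweight p x) = 1 := by
    unfold bweight
    rw [sum_prod_bool]
    rw [Finset.prod_congr rfl (fun i _ => by ring : ∀ i ∈ Finset.univ, p i + (1 - p i) = 1)]
    exact Finset.prod_const_one
  have hcov : bcover p B := by
    unfold bcover
    rw [Finset.sum_congr rfl (fun x _ => if_pos (hcovall x))]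
    exact hsum1
  refine ⟨hcov, ?_⟩
  -- the key products
  set W := ∏ i, (1 - p i) with hWdef
  set Q := ∏ i, (if b i then (1:ℝ) else 1 - p i) with hQdef
  set R := ∏ i, (if b i then 1 - p i else (1:ℝ)) with hRdef
  have hWQR : W = Q * R := by
    rw [hQdef, hRdef, hWdef, ← Finset.prod_mul_distrib]
    refine Finset.prod_congr rfl (fun i _ => ?_)
    by_cases hbi : b i = true <;> simp [hbi]
  have hQ0 : 0 ≤ Q := by
    apply Finset.prod_nonneg; intro i _
    by_cases hbi : b i = true <;> simp [hbi]
    linarith [hp1 i]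
  -- sum of weights over x ≤ b
  have hsumQ : (∑ x : Fin n → Bool, if x ≤ b then bweight p x else 0) = Q := by
    have step : ∀ x : Fin n → Bool, (if x ≤ b then bweight p x else 0)
        = ∏ i, (if x i then (if b i then p i else 0) else 1 - p i) := by
      intro x
      by_cases hx : x ≤ b
      · rw [if_pos hx]
        unfold bweight
        refine Finset.prod_congr rfl (fun i _ => ?_)
        by_cases hxi : x i = true
        · have hbi : b i = true := by
            have h := hx i
            rw [hxi] at h
            revert h; cases b i <;> simp
          simp [hxi, hbi]
        · simp [hxi]
      · rw [if_neg hx]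
        rw [Pi.le_def] at hx
        push_neg at hx
        obtain ⟨i, hi⟩ := hx
        have hxi : x i = true := by revert hi; cases x i <;> simp
        have hbi : b i = false := by revert hi; cases b i <;> simp [hxi]
        symm
        apply Finset.prod_eq_zero (Finset.mem_univ i)
        simp [hxi, hbi]
    rw [Finset.sum_congr rfl (fun x _ => step x), sum_prod_bool]
    refine Finset.prod_congr rfl (fun i _ => ?_)
    by_cases hbi : b i = true <;> simp [hbi] <;> ring
  -- sum of weights at x = 0
  have hsum0 : (∑ x : Fin n → Bool, if x = (fun _ => false) then bweight p x else 0) = W := by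
    rw [Fintype.sum_ite_eq' (fun _ => false) (bweight p)]
    simp [bweight, hWdef]
  -- bmin facts
  have hbdd : ∀ x : Fin n → Bool, BddBelow (bcost c '' {b' | b' ∈ B ∧ x ≤ b'}) := by
    intro x
    exact Set.Finite.bddBelow (Set.Finite.image _
      (Set.Finite.subset B.finite_toSet (fun y hy => hy.1)))
  have hminle : ∀ (x b' : Fin n → Bool), b' ∈ B → x ≤ b' → bmin c B x ≤ bcost c b' := by
    intro x b' h1' h2'
    exact csInf_le (hbdd x) ⟨b', ⟨h1', h2'⟩, rfl⟩
  -- costs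
  have hsI : (∑ i ∈ I, (a i : ℝ)) = (S : ℝ) / 2 := by
    have := congrArg (fun k : ℕ => (k : ℝ)) hI
    push_cast at this
    linarith
  have hsU : (∑ i, (a i : ℝ)) = (S : ℝ) := by rw [hS]; push_cast; rfl
  have hcost0 : bcost c (fun _ => false) = 0 := by simp [bcost]
  have hcostb : bcost c b = (S : ℝ) / 2 := by
    unfold bcost
    rw [← Finset.sum_filter]
    rw [show Finset.univ.filter (fun i => b i = true) = I by
      ext i; simp [hb i]]
    simp only [hc]
    exact hsI
  have hcost1 : bcost c (fun _ => true) = (S : ℝ) := by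
    unfold bcost
    simp only [if_true]
    simp only [hc]
    exact hsU
  -- pointwise bound on bmin
  have hboundx : ∀ x : Fin n → Bool, bweight p x * bmin c B x ≤ bweight p x *
      ((S:ℝ) - ((S:ℝ)/2) * (if x ≤ b then 1 else 0)
        - ((S:ℝ)/2) * (if x = (fun _ => false) then 1 else 0)) := by
    intro x
    have hS0 : (0:ℝ) ≤ (S:ℝ) := by positivity
    refine mul_le_mul_of_nonneg_left ?_ (hw0x x)
    by_cases h0 : x = (fun _ => false)
    · have hxb : x ≤ b := by rw [h0]; intro i; exact Bool.false_le _
      rw [if_pos hxb, if_pos h0]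
      have h := hminle x _ h0B (by rw [h0])
      rw [hcost0] at h
      linarith only [h]
    · by_cases hxb : x ≤ b
      · rw [if_pos hxb, if_neg h0]
        have h := hminle x b hbB hxb
        rw [hcostb] at h
        linarith only [h]
      · rw [if_neg hxb, if_neg h0]
        have h := hminle x _ h1B (fun i => Bool.le_true _)
        rw [hcost1] at h
        linarith only [h]
  -- summing the bound
  have hexp : bexp p c B ≤ (S:ℝ) - ((S:ℝ)/2) * Q - ((S:ℝ)/2) * W := by
    unfold bexp
    calc ∑ x : Fin n → Bool, bweight p x * bmin c B x
        ≤ ∑ x : Fin n → Bool, bweight p x *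
          ((S:ℝ) - ((S:ℝ)/2) * (if x ≤ b then 1 else 0)
            - ((S:ℝ)/2) * (if x = (fun _ => false) then 1 else 0)) :=
          Finset.sum_le_sum (fun x _ => hboundx x)
      _ = ∑ x : Fin n → Bool, ((S:ℝ) * bweight p x
            - ((S:ℝ)/2) * (if x ≤ b then bweight p x else 0)
            - ((S:ℝ)/2) * (if x = (fun _ => false) then bweight p x else 0)) := by
          refine Finset.sum_congr rfl (fun x _ => ?_)
          by_cases h1 : x ≤ b <;> by_cases h2 : x = (fun _ => false)
          · simp only [if_pos h1, if_pos h2]; ring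
          · simp only [if_pos h1, if_neg h2]; ring
          · simp only [if_neg h1, if_pos h2]; ring
          · simp only [if_neg h1, if_neg h2]; ring
      _ = (S:ℝ) * (∑ x : Fin n → Bool, bweight p x)
            - ((S:ℝ)/2) * (∑ x : Fin n → Bool, if x ≤ b then bweight p x else 0)
            - ((S:ℝ)/2) * (∑ x : Fin n → Bool, if x = (fun _ => false) then bweight p x else 0) := by
          rw [Finset.sum_sub_distrib, Finset.sum_sub_distrib, ← Finset.mul_sum,
            ← Finset.mul_sum, ← Finset.mul_sum]
      _ = (S:ℝ) - ((S:ℝ)/2) * Q - ((S:ℝ)/2) * W := by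
          rw [hsum1, hsumQ, hsum0]; ring
  -- final arithmetic
  have hkey : ((S:ℝ)/2) * W + (S:ℝ)/(4*(M:ℝ)) ≤ ((S:ℝ)/2) * Q + (S:ℝ)/(M:ℝ)^2 := by
    rcases Nat.eq_zero_or_pos S with hS0 | hSpos
    · simp [hS0]
    · have hS1 : 1 ≤ S := hSpos
      have hM2 : 2 ≤ M := by rw [hM]; nlinarith
      have hs1 : (1:ℝ) ≤ (S:ℝ) := by exact_mod_cast hS1
      have hm2 : (2:ℝ) ≤ (M:ℝ) := by exact_mod_cast hM2
      have hm0 : (0:ℝ) < (M:ℝ) := by linarith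
      have hs0 : (0:ℝ) < (S:ℝ) := by linarith
      set v : ℝ := 1/(2*(M:ℝ)) with hvdef
      have hv0 : 0 < v := by positivity
      have hv4 : v ≤ 1/4 := by
        rw [hvdef]
        rw [div_le_div_iff₀ (by linarith) (by norm_num)]
        linarith
      -- sums of p over I and its complement
      have htsum : (∑ i, (if b i then p i else 0)) = v := by
        rw [← Finset.sum_filter]
        rw [show Finset.univ.filter (fun i => b i = true) = I by ext i; simp [hb i]]
        have : (∑ i ∈ I, p i) = (∑ i ∈ I, (a i : ℝ)) / ((S:ℝ) * (M:ℝ)) := by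
          rw [Finset.sum_div]
          exact Finset.sum_congr rfl (fun i _ => hp i)
        rw [this, hsI, hvdef]
        field_simp
      have husum : (∑ i, (if b i then 0 else p i)) = v := by
        have htot : (∑ i, p i) = 2 * v := by
          have : (∑ i, p i) = (∑ i, (a i : ℝ)) / ((S:ℝ) * (M:ℝ)) := by
            rw [Finset.sum_div]
            exact Finset.sum_congr rfl (fun i _ => hp i)
          rw [this, hsU, hvdef]
          field_simp
        have hsplit : (∑ i, (if b i then p i else 0)) + (∑ i, (if b i then 0 else p i))
            = ∑ i, p i := by
          rw [← Finset.sum_add_distrib]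
          refine Finset.sum_congr rfl (fun i _ => ?_)
          by_cases hbi : b i = true <;> simp [hbi]
        rw [htsum] at hsplit
        linarith
      -- bounds on Q and R
      have hQl : 1 - v ≤ Q := by
        rw [← husum, hQdef]
        have := wprod_ge Finset.univ (fun i => if b i then 0 else p i)
          (fun i _ => by by_cases hbi : b i = true <;> simp [hbi, hp0 i])
          (fun i _ => by by_cases hbi : b i = true <;> simp [hbi, hp1 i])
        refine le_trans this (le_of_eq ?_)
        refine Finset.prod_congr rfl (fun i _ => ?_)
        by_cases hbi : b i = true <;> simp [hbi]
      have hRu : R ≤ 1 - v + v^2/2 := by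
        rw [← htsum, hRdef]
        have := wprod_le Finset.univ (fun i => if b i then p i else 0)
          (fun i _ => by by_cases hbi : b i = true <;> simp [hbi, hp0 i])
          (fun i _ => by by_cases hbi : b i = true <;> simp [hbi, hp1 i])
        refine le_trans (le_of_eq ?_) this
        refine Finset.prod_congr rfl (fun i _ => ?_)
        by_cases hbi : b i = true <;> simp [hbi]
      have hWle : W ≤ Q * (1 - v + v^2/2) := by
        rw [hWQR]
        exact mul_le_mul_of_nonneg_left hRu hQ0
      -- rewrite the divisions in terms of v
      have hm0' : (M:ℝ) ≠ 0 := ne_of_gt hm0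
      have hd1 : (S:ℝ)/(4*(M:ℝ)) = (S:ℝ) * v / 2 := by
        rw [hvdef, mul_one_div, div_div, show (2*(M:ℝ)*2) = 4 * (M:ℝ) by ring]
      have hd2 : (S:ℝ)/(M:ℝ)^2 = 4 * (S:ℝ) * v^2 := by
        rw [hvdef, div_pow, one_pow, show ((2:ℝ)*(M:ℝ))^2 = 4 * (M:ℝ)^2 by ring,
          mul_one_div, mul_div_mul_left _ _ (by norm_num : (4:ℝ) ≠ 0)]
      rw [hd1, hd2]
      have hvv : 0 ≤ v - v^2/2 := by nlinarith
      have h1 : ((S:ℝ)/2) * W ≤ ((S:ℝ)/2) * (Q * (1 - v + v^2/2)) :=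
        mul_le_mul_of_nonneg_left hWle (by linarith : (0:ℝ) ≤ (S:ℝ)/2)
      have h2 : (1-v) * (v - v^2/2) ≤ Q * (v - v^2/2) :=
        mul_le_mul_of_nonneg_right hQl hvv
      have h2' : ((S:ℝ)/2) * ((1-v) * (v - v^2/2)) ≤ ((S:ℝ)/2) * (Q * (v - v^2/2)) :=
        mul_le_mul_of_nonneg_left h2 (by linarith : (0:ℝ) ≤ (S:ℝ)/2)
      have hsv2 : 0 ≤ (S:ℝ) * v^2 := mul_nonneg hs0.le (sq_nonneg v)
      have hsv3 : 0 ≤ (S:ℝ) * v^2 * v := mul_nonneg hsv2 hv0.le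
      nlinarith [h1, h2', hsv2, hsv3]
  rw [hγ]
  linarith [hexp, hkey]
end

section
/- Let t and a_1, …, a_m be positive integers with Σ_{i=1}^m a_i divisible by t, let S := Σ_{i=1}^m a_i, let M := 13·S², and let n := m+1. Define p ∈ [0,1]^n by p_i := a_i/M⁴ for i ∈ [m] and p_{m+1} := 1/M⁶, define c ∈ ℝ^n by c_i := a_i for i ∈ [m] and c_{m+1} := 2M, and let γ := S²/(t·M⁴) + 6/M⁵. If there exists a Pareto cover B ⊆ {0,1}^{m+1} of μ_p with |B| = t+2 and E_{μ_p}[c_B] ≤ γ, then there exists a partition (I_j)_{j=1}^t of [m] with Σ_{i∈I_j} a_i = S/t for all j ∈ [t]. -/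
/-!
All points of `{0,1}^(m+1)` have positive weight, so `B` covers everything. Since the weight
of the zero vector is `∏ (1 - p k) ≥ 1/2`, its cheapest cover is the zero vector itself; the
cheapest cover of each `e_i`, `i ≤ m`, avoids the expensive last coordinate; and some other
vector covers `e_(m+1)`. So the cheapest covers of `e_1, …, e_m` lie among the `t` remaining
vectors, which partitions `[m]` into fibres `I_j`. A vector covering `I_j` costs at least
`s_j = ∑_{i ∈ I_j} a_i`, so `E[c_B] ≥ ∏ (1 - p k) · ∑_j s_j² / M⁴`. If some `s_j ≠ S / t`,
integrality gives `∑_j s_j² ≥ S² / t + 2`, and the gain `2 / M⁴` beats the slack `6 / M⁵`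
of `γ`.
-/

open Finset

lemma one_sub_sum_le_prod_one_sub {ι : Type*} (s : Finset ι) {f : ι → ℝ}
    (hf : ∀ i ∈ s, f i ∈ Set.Icc 0 1) : 1 - ∑ i ∈ s, f i ≤ ∏ i ∈ s, (1 - f i) := by
  classical
  induction s using Finset.induction_on with
  | empty => simp
  | insert i s hi ih =>
    rw [sum_insert hi, prod_insert hi]
    have hfi := hf i (mem_insert_self i s)
    have ih := ih fun j hj => hf j (mem_insert_of_mem hj)
    have : 0 ≤ ∑ j ∈ s, f j := sum_nonneg fun j hj => (hf j (mem_insert_of_mem hj)).1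
    nlinarith [hfi.1, hfi.2]

lemma exists_factor_fin {α ι : Type*} {s : Finset α} {t : ℕ} (hs : s.card = t) {f : ι → α}
    (hf : ∀ i, f i ∈ s) : ∃ (g : ι → Fin t) (e : Fin t → α), ∀ i, e (g i) = f i := by
  let σ := s.equivFinOfCardEq hs
  exact ⟨fun i => σ ⟨f i, hf i⟩, fun j => σ.symm j, fun i => by simp⟩

section ParetoCover

variable {n : ℕ} {p c : Fin n → ℝ} {B : Finset (Fin n → Bool)}

def basisVec (k : Fin n) : Fin n → Bool := fun j => decide (j = k)

lemma basisVec_le_iff {k : Fin n} {b : Fin n → Bool} : basisVec k ≤ b ↔ b k = true := by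
  refine ⟨fun h => le_antisymm (Bool.le_true _) (by simpa [basisVec] using h k), fun hb j => ?_⟩
  by_cases hj : j = k
  · simp [basisVec, hj, hb]
  · simp [basisVec, hj]

lemma basisVec_injective : Function.Injective (basisVec (n := n)) := fun k k' h => by
  simpa [basisVec] using congrFun h k

lemma sum_bweight (p : Fin n → ℝ) : ∑ x, bweight p x = 1 := by
  simp only [bweight]
  rw [← Fintype.prod_sum fun k (b : Bool) => if b then p k else 1 - p k]
  simp

lemma bweight_nonneg (hp : ∀ k, p k ∈ Set.Icc 0 1) (x : Fin n → Bool) : 0 ≤ bweight p x :=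
  prod_nonneg fun k _ => by split_ifs <;> linarith [(hp k).1, (hp k).2]

lemma bweight_pos (hp : ∀ k, p k ∈ Set.Ioo 0 1) (x : Fin n → Bool) : 0 < bweight p x :=
  prod_pos fun k _ => by split_ifs <;> linarith [(hp k).1, (hp k).2]

lemma bweight_false (p : Fin n → ℝ) : bweight p (fun _ => false) = ∏ k, (1 - p k) := by
  simp [bweight]

lemma mul_prod_le_bweight_basisVec (hp : ∀ k, p k ∈ Set.Icc 0 1) (k : Fin n) :
    p k * ∏ j, (1 - p j) ≤ bweight p (basisVec k) := by
  have hrest : ∏ j ∈ {k}ᶜ, (if basisVec k j then p j else 1 - p j) =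
      ∏ j ∈ {k}ᶜ, (1 - p j) :=
    prod_congr rfl fun j hj => by simp_all [basisVec]
  rw [bweight, Fintype.prod_eq_mul_prod_compl k fun j => if basisVec k j then p j else 1 - p j,
    hrest, Fintype.prod_eq_mul_prod_compl k fun j => 1 - p j]
  simp only [basisVec, decide_true, if_true]
  have : 0 ≤ ∏ j ∈ {k}ᶜ, (1 - p j) := prod_nonneg fun j _ => by linarith [(hp j).2]
  nlinarith [mul_nonneg (mul_nonneg (hp k).1 (hp k).1) this]

open Classical in
lemma exists_le_of_bcover (hB : bcover p B) (hp : ∀ k, p k ∈ Set.Ioo 0 1) (x : Fin n → Bool) :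
    ∃ b ∈ B, x ≤ b := by
  by_contra hx
  have hlt : ∑ y, (if ∃ b ∈ B, y ≤ b then bweight p y else 0) < ∑ y, bweight p y := by
    refine sum_lt_sum (fun y _ => ?_) ⟨x, mem_univ x, by simpa [hx] using bweight_pos hp x⟩
    split_ifs
    exacts [le_rfl, (bweight_pos hp y).le]
  rw [sum_bweight] at hlt
  exact hlt.ne hB

lemma bcost_nonneg (hc : ∀ k, 0 ≤ c k) (b : Fin n → Bool) : 0 ≤ bcost c b :=
  sum_nonneg fun k _ => by split_ifs <;> simp [hc k]

lemma sum_le_bcost (hc : ∀ k, 0 ≤ c k) {b : Fin n → Bool} {s : Finset (Fin n)}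
    (hs : ∀ k ∈ s, b k = true) : ∑ k ∈ s, c k ≤ bcost c b :=
  calc ∑ k ∈ s, c k = ∑ k ∈ s, (if b k then c k else 0) :=
        sum_congr rfl fun k hk => by simp [hs k hk]
    _ ≤ bcost c b := sum_le_univ_sum_of_nonneg fun k => by split_ifs <;> simp [hc k]

lemma le_bcost (hc : ∀ k, 0 ≤ c k) {b : Fin n → Bool} {k : Fin n} (hk : b k = true) :
    c k ≤ bcost c b := by
  simpa using sum_le_bcost hc (s := {k}) (by simpa using hk)

lemma eq_false_of_bcost_lt_one (hc : ∀ k, 1 ≤ c k) {b : Fin n → Bool} (hb : bcost c b < 1)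
    (k : Fin n) : b k = false := by
  by_contra hk
  have := le_bcost (fun j => zero_le_one.trans (hc j)) (Bool.not_eq_false _ ▸ hk)
  linarith [hc k]

lemma bmin_nonneg (hc : ∀ k, 0 ≤ c k) (B : Finset (Fin n → Bool)) (x : Fin n → Bool) :
    0 ≤ bmin c B x :=
  Real.sInf_nonneg (by rintro _ ⟨b, _, rfl⟩; exact bcost_nonneg hc b)

lemma exists_bcost_eq_bmin {x : Fin n → Bool} (hx : ∃ b ∈ B, x ≤ b) :
    ∃ b ∈ B, x ≤ b ∧ bcost c b = bmin c B x := by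
  obtain ⟨b, hb, hxb⟩ := hx
  have hfin : (bcost c '' {b | b ∈ B ∧ x ≤ b}).Finite :=
    (B.finite_toSet.subset fun _ hb => hb.1).image _
  have hne : (bcost c '' {b | b ∈ B ∧ x ≤ b}).Nonempty := ⟨_, b, ⟨hb, hxb⟩, rfl⟩
  obtain ⟨b', ⟨hb', hxb'⟩, h⟩ := hne.csInf_mem hfin
  exact ⟨b', hb', hxb', h⟩

lemma sum_bweight_mul_bmin_le_bexp (hp : ∀ k, p k ∈ Set.Icc 0 1) (hc : ∀ k, 0 ≤ c k)
    (X : Finset (Fin n → Bool)) : ∑ x ∈ X, bweight p x * bmin c B x ≤ bexp p c B :=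
  sum_le_univ_sum_of_nonneg fun x => mul_nonneg (bweight_nonneg hp x) (bmin_nonneg hc B x)

end ParetoCover

section Fibers

variable {ι κ : Type*} [Fintype ι] [Fintype κ] [DecidableEq κ]

lemma sum_sq_fiberwise_le (g : ι → κ) {a : ι → ℝ} {C : κ → ℝ} (ha : ∀ i, 0 ≤ a i)
    (hC : ∀ j, ∑ i with g i = j, a i ≤ C j) :
    ∑ j, (∑ i with g i = j, a i) ^ 2 ≤ ∑ i, a i * C (g i) := by
  rw [← sum_fiberwise univ g fun i => a i * C (g i)]
  gcongr with j
  calc (∑ i with g i = j, a i) ^ 2 ≤ (∑ i with g i = j, a i) * C j := by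
        rw [sq]; exact mul_le_mul_of_nonneg_left (hC j) (sum_nonneg fun i _ => ha i)
    _ = ∑ i with g i = j, a i * C (g i) := by
        rw [sum_mul]; exact sum_congr rfl fun i hi => by rw [(mem_filter.1 hi).2]

lemma eq_of_sum_sq_lt {s : κ → ℕ} {q : ℕ} (hsum : ∑ j, s j = Fintype.card κ * q)
    (hsq : ∑ j, s j ^ 2 < Fintype.card κ * q ^ 2 + 2) (j : κ) : s j = q := by
  by_contra hj
  set d : κ → ℤ := fun j => s j - q
  have hsum' : ∑ j, (s j : ℤ) = Fintype.card κ * q := by exact_mod_cast hsum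
  have hd_sum : ∑ j, d j = 0 := by
    simp only [d, sum_sub_distrib, sum_const, card_univ, nsmul_eq_mul, hsum', sub_self]
  have hd_sq : ∑ j, d j ^ 2 < 2 := by
    have hsq' : ∑ j, (s j : ℤ) ^ 2 < Fintype.card κ * q ^ 2 + 2 := by exact_mod_cast hsq
    have hexp : ∀ j, d j ^ 2 = (s j : ℤ) ^ 2 - 2 * q * s j + q ^ 2 := fun j => by ring
    simp only [hexp, sum_add_distrib, sum_sub_distrib, ← mul_sum, sum_const, card_univ,
      nsmul_eq_mul, hsum']
    linarith
  have hdj : d j ≠ 0 := by simp only [d]; omega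
  obtain ⟨j', hj'j, hdj'⟩ : ∃ j', j' ≠ j ∧ d j' ≠ 0 := by
    by_contra! h
    exact hdj (by rw [← hd_sum, sum_eq_single j (fun j' _ hj' => h j' hj') (by simp)])
  have hpair : d j ^ 2 + d j' ^ 2 ≤ ∑ j, d j ^ 2 :=
    calc d j ^ 2 + d j' ^ 2 = ∑ i ∈ {j, j'}, d i ^ 2 :=
          (sum_pair (f := fun i => d i ^ 2) hj'j.symm).symm
      _ ≤ ∑ j, d j ^ 2 := sum_le_univ_sum_of_nonneg fun _ => sq_nonneg _
  linarith [sq_pos_of_ne_zero hdj, sq_pos_of_ne_zero hdj']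

end Fibers

lemma exists_cover_selector {n : ℕ} {p c : Fin n → ℝ} {B : Finset (Fin n → Bool)} {γ : ℝ}
    (hB : bcover p B) (hp : ∀ k, p k ∈ Set.Ioo 0 1) (hc : ∀ k, 0 ≤ c k)
    (hE : bexp p c B ≤ γ) :
    ∃ f : (Fin n → Bool) → (Fin n → Bool), (∀ x, f x ∈ B ∧ x ≤ f x) ∧
      ∀ X : Finset (Fin n → Bool), ∑ x ∈ X, bweight p x * bcost c (f x) ≤ γ := by
  choose f hfB hxf hf using fun x => exists_bcost_eq_bmin (c := c) (exists_le_of_bcover hB hp x)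
  refine ⟨f, fun x => ⟨hfB x, hxf x⟩, fun X => ?_⟩
  simp only [hf]
  exact (sum_bweight_mul_bmin_le_bexp (fun k => Set.Ioo_subset_Icc_self (hp k)) hc X).trans hE

lemma exists_cheap_basis_covers {m : ℕ} {p c : Fin (m + 1) → ℝ}
    {B : Finset (Fin (m + 1) → Bool)} {γ : ℝ} (hB : bcover p B) (hE : bexp p c B ≤ γ)
    (hp : ∀ k, p k ∈ Set.Ioo 0 1) (hc : ∀ k, 1 ≤ c k) (hγ : γ < ∏ k, (1 - p k))
    (hγ' : ∀ i : Fin m, γ < p i.castSucc * (∏ k, (1 - p k)) * c (Fin.last m)) :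
    ∃ (b₀ : Fin (m + 1) → Bool) (v : Fin m → Fin (m + 1) → Bool),
      b₀ ∈ B ∧ (∀ k, b₀ k = false) ∧
      (∀ i, v i ∈ B ∧ v i i.castSucc = true ∧ v i (Fin.last m) = false) ∧
      (∏ k, (1 - p k)) * ∑ i, p i.castSucc * bcost c (v i) ≤ γ := by
  have hc0 k : 0 ≤ c k := zero_le_one.trans (hc k)
  have hpI k : p k ∈ Set.Icc 0 1 := Set.Ioo_subset_Icc_self (hp k)
  have hP : 0 < ∏ k, (1 - p k) := prod_pos fun k _ => by linarith [(hp k).2]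
  obtain ⟨f, hf, hfγ⟩ := exists_cover_selector hB hp hc0 hE
  refine ⟨f fun _ => false, fun i => f (basisVec i.castSucc), (hf _).1, ?_,
    fun i => ⟨(hf _).1, basisVec_le_iff.1 (hf _).2, ?_⟩, ?_⟩
  · refine eq_false_of_bcost_lt_one hc (lt_of_mul_lt_mul_left ?_ hP.le)
    simpa [bweight_false] using (hfγ {fun _ => false}).trans_lt (hγ.trans_eq (mul_one _).symm)
  · -- paying `c (Fin.last m)` to cover `basisVec i.castSucc` alone would already exceed `γ`
    by_contra h
    have hcost := le_bcost hc0 (Bool.not_eq_false _ ▸ h)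
    have hw := mul_prod_le_bweight_basisVec hpI i.castSucc
    have := hfγ {basisVec i.castSucc}
    rw [sum_singleton] at this
    nlinarith [hγ' i, mul_le_mul hw hcost (hc0 _) (bweight_nonneg hpI _)]
  · calc (∏ k, (1 - p k)) * ∑ i : Fin m, p i.castSucc * bcost c (f (basisVec i.castSucc))
        ≤ ∑ i : Fin m, bweight p (basisVec i.castSucc) * bcost c (f (basisVec i.castSucc)) := by
          rw [mul_sum]
          refine sum_le_sum fun i _ => ?_
          rw [← mul_assoc, mul_comm (∏ k, _)]
          exact mul_le_mul_of_nonneg_right (mul_prod_le_bweight_basisVec hpI _)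
            (bcost_nonneg hc0 _)
      _ = ∑ x ∈ univ.image fun i : Fin m => basisVec i.castSucc, bweight p x * bcost c (f x) :=
          (sum_image (f := fun x => bweight p x * bcost c (f x)) fun i _ j _ h =>
            Fin.castSucc_injective m (basisVec_injective h)).symm
      _ ≤ γ := hfγ _

lemma exists_fin_assignment {m t : ℕ} {p c : Fin (m + 1) → ℝ}
    {B : Finset (Fin (m + 1) → Bool)} {γ : ℝ} (hB : bcover p B) (hcard : B.card = t + 2)
    (hE : bexp p c B ≤ γ)
    (hp : ∀ k, p k ∈ Set.Ioo 0 1) (hc : ∀ k, 1 ≤ c k) (hγ : γ < ∏ k, (1 - p k))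
    (hγ' : ∀ i : Fin m, γ < p i.castSucc * (∏ k, (1 - p k)) * c (Fin.last m)) :
    ∃ (g : Fin m → Fin t) (e : Fin t → Fin (m + 1) → Bool),
      (∀ i, e (g i) i.castSucc = true) ∧
      (∏ k, (1 - p k)) * ∑ i : Fin m, p i.castSucc * bcost c (e (g i)) ≤ γ := by
  obtain ⟨b₀, v, hb₀B, hb₀, hv, hcost⟩ := exists_cheap_basis_covers hB hE hp hc hγ hγ'
  obtain ⟨u, huB, hu⟩ := exists_le_of_bcover hB hp (basisVec (Fin.last m))
  have hu_last : u (Fin.last m) = true := basisVec_le_iff.1 hu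
  have hcard' : ((B.erase b₀).erase u).card = t := by
    rw [card_erase_of_mem (mem_erase.2 ⟨fun h => by simp [h, hb₀] at hu_last, huB⟩),
      card_erase_of_mem hb₀B, hcard]
    rfl
  have hvB : ∀ i, v i ∈ (B.erase b₀).erase u := fun i =>
    mem_erase.2 ⟨fun h => by simp [← h, (hv i).2.2] at hu_last,
      mem_erase.2 ⟨fun h => by simpa [h, hb₀] using (hv i).2.1, (hv i).1⟩⟩
  obtain ⟨g, e, hge⟩ := exists_factor_fin hcard' hvB
  exact ⟨g, e, fun i => hge i ▸ (hv i).2.1, by simpa only [hge] using hcost⟩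

section Reduction

variable {m : ℕ} {a : Fin m → ℕ} {S M : ℝ} {p c : Fin (m + 1) → ℝ}

lemma reduction_prob_mem_Ioo (ha : ∀ i, 0 < a i) (hS : S = ∑ i, (a i : ℝ)) (hS1 : 1 ≤ S)
    (hM : M = 13 * S ^ 2) (hp1 : ∀ i, p i.castSucc = a i / M ^ 4)
    (hp2 : p (Fin.last m) = 1 / M ^ 6) (k : Fin (m + 1)) : p k ∈ Set.Ioo 0 1 := by
  have hM1 : 1 < M := by nlinarith
  have hSM : S < M ^ 4 := by nlinarith [one_le_pow₀ (n := 3) hM1.le]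
  induction k using Fin.lastCases with
  | last =>
    rw [hp2]
    exact ⟨by positivity, (div_lt_one (by positivity)).2 (one_lt_pow₀ hM1 (by norm_num))⟩
  | cast i =>
    have hai : (a i : ℝ) ≤ S :=
      hS ▸ single_le_sum (fun j _ => Nat.cast_nonneg (a j)) (mem_univ i)
    rw [hp1]
    exact ⟨by have := ha i; positivity, (div_lt_one (by positivity)).2 (by linarith)⟩

lemma reduction_one_sub_le_prod (ha : ∀ i, 0 < a i) (hS : S = ∑ i, (a i : ℝ)) (hS1 : 1 ≤ S)
    (hM : M = 13 * S ^ 2) (hp1 : ∀ i, p i.castSucc = a i / M ^ 4)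
    (hp2 : p (Fin.last m) = 1 / M ^ 6) : 1 - 2 * S / M ^ 4 ≤ ∏ k, (1 - p k) := by
  have hp k := Set.Ioo_subset_Icc_self (reduction_prob_mem_Ioo ha hS hS1 hM hp1 hp2 k)
  refine le_trans ?_ (one_sub_sum_le_prod_one_sub univ fun k _ => hp k)
  have hsum : ∑ k, p k = S / M ^ 4 + 1 / M ^ 6 := by
    simp only [Fin.sum_univ_castSucc, hp1, hp2, ← sum_div, hS]
  have hM1 : 1 ≤ M := by nlinarith
  have : 1 / M ^ 6 ≤ S / M ^ 4 :=
    calc 1 / M ^ 6 ≤ 1 / M ^ 4 :=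
          one_div_le_one_div_of_le (by positivity) (pow_le_pow_right₀ hM1 (by norm_num))
      _ ≤ S / M ^ 4 := by gcongr
  rw [hsum, mul_div_assoc]
  linarith

lemma reduction_gamma_lt (hS1 : 1 ≤ S) (hM : M = 13 * S ^ 2) {t : ℝ} (ht : 1 ≤ t) :
    S ^ 2 / (t * M ^ 4) + 6 / M ^ 5 < 1 / (2 * M ^ 3) := by
  have hM13 : 13 ≤ M := by nlinarith
  have h1 : S ^ 2 / (t * M ^ 4) ≤ 1 / 13 * (1 / M ^ 3) :=
    calc S ^ 2 / (t * M ^ 4) ≤ S ^ 2 / M ^ 4 :=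
          div_le_div_of_nonneg_left (sq_nonneg S) (by positivity)
            (le_mul_of_one_le_left (by positivity) ht)
      _ = 1 / 13 * (1 / M ^ 3) := by rw [hM]; field_simp
  have h2 : 6 / M ^ 5 ≤ 6 / 169 * (1 / M ^ 3) := by
    rw [div_mul_div_comm, div_le_div_iff₀ (by positivity) (by positivity)]
    have := mul_le_mul_of_nonneg_right (show (169 : ℝ) ≤ M ^ 2 by nlinarith)
      (by positivity : 0 ≤ M ^ 3)
    linarith [show M ^ 5 = M ^ 2 * M ^ 3 by ring]
  have h3 : 1 / (2 * M ^ 3) = 1 / 2 * (1 / M ^ 3) := by field_simp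
  have : 0 < 1 / M ^ 3 := by positivity
  linarith

lemma reduction_sum_sq_lt {P Q T : ℝ} (hS1 : 1 ≤ S) (hM : M = 13 * S ^ 2)
    (hP : 1 - 2 * S / M ^ 4 ≤ P) (hQ0 : 0 ≤ Q) (hQ : Q ≤ S ^ 2)
    (h : P * (Q / M ^ 4) ≤ T / M ^ 4 + 6 / M ^ 5) : Q < T + 2 := by
  have hM13 : 13 ≤ M := by nlinarith
  have hM4 : 0 < M ^ 4 := by positivity
  have h1 : P * Q ≤ T + 6 / M := by
    have := mul_le_mul_of_nonneg_right h hM4.le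
    rwa [mul_assoc, div_mul_cancel₀ _ hM4.ne', add_mul, div_mul_cancel₀ _ hM4.ne',
      show M ^ 5 = M * M ^ 4 by ring, div_mul_eq_div_div, div_mul_cancel₀ _ hM4.ne'] at this
  have h2 : 6 / M ≤ 6 / 13 := div_le_div_of_nonneg_left (by norm_num) (by norm_num) hM13
  have h3 : 2 * S * Q / M ^ 4 ≤ 2 / 13 := by
    rw [div_le_div_iff₀ hM4 (by norm_num)]
    have : 13 * S ^ 3 ≤ M ^ 4 := by
      nlinarith [pow_le_pow_left₀ (by linarith) (show S ≤ M by nlinarith) 3]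
    nlinarith
  have h4 : Q - 2 * S * Q / M ^ 4 ≤ P * Q := by
    have := mul_le_mul_of_nonneg_right hP hQ0
    rwa [sub_mul, one_mul, div_mul_eq_mul_div] at this
  linarith

lemma two_mul_div_pow_four_le_half (hS1 : 1 ≤ S) (hM : M = 13 * S ^ 2) :
    2 * S / M ^ 4 ≤ 1 / 2 := by
  have hSM : S ≤ M := by nlinarith
  have hM0 : 0 < M := by linarith
  rw [div_le_div_iff₀ (by positivity) (by norm_num)]
  nlinarith [pow_le_pow_left₀ (by linarith) (show 13 ≤ M by nlinarith) 3]

lemma reduction_gamma_lt_weights {P γ : ℝ} (ha : ∀ i, 0 < a i) (hS1 : 1 ≤ S)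
    (hM : M = 13 * S ^ 2) (hp1 : ∀ i, p i.castSucc = a i / M ^ 4) (hc2 : c (Fin.last m) = 2 * M)
    (hP : 1 / 2 ≤ P) (hγ : γ < 1 / (2 * M ^ 3)) :
    γ < P ∧ ∀ i : Fin m, γ < p i.castSucc * P * c (Fin.last m) := by
  have hM1 : 1 ≤ M := by nlinarith
  refine ⟨hγ.trans_le ?_, fun i => hγ.trans_le ?_⟩
  · calc 1 / (2 * M ^ 3) ≤ 1 / 2 := by
          gcongr; exact le_mul_of_one_le_right (by norm_num) (one_le_pow₀ hM1)
      _ ≤ P := hP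
  · have hai : (1 : ℝ) ≤ a i := by exact_mod_cast ha i
    calc 1 / (2 * M ^ 3) ≤ 1 / M ^ 3 := by gcongr; linarith [one_le_pow₀ (n := 3) hM1]
      _ = 1 / M ^ 4 * (1 / 2) * (2 * M) := by field_simp
      _ ≤ p i.castSucc * P * c (Fin.last m) := by rw [hp1, hc2]; gcongr

lemma reduction_fiber_sum_sq_lt {t q : ℕ} {P γ : ℝ} {g : Fin m → Fin t}
    {e : Fin t → Fin (m + 1) → Bool} (hS : S = ∑ i, (a i : ℝ)) (hS1 : 1 ≤ S)
    (hM : M = 13 * S ^ 2) (hq : S = t * q) (hp1 : ∀ i, p i.castSucc = a i / M ^ 4)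
    (hc1 : ∀ i, c i.castSucc = a i) (hc0 : ∀ k, 0 ≤ c k) (hP : 1 - 2 * S / M ^ 4 ≤ P)
    (hγ : γ = S ^ 2 / (t * M ^ 4) + 6 / M ^ 5) (he : ∀ i, e (g i) i.castSucc = true)
    (hcost : P * ∑ i, p i.castSucc * bcost c (e (g i)) ≤ γ) :
    ∑ j, (∑ i with g i = j, a i) ^ 2 < t * q ^ 2 + 2 := by
  set s : Fin t → ℝ := fun j => ∑ i with g i = j, (a i : ℝ)
  have hs : ∑ j, s j = S := by rw [sum_fiberwise, hS]
  have hfiber j : s j ≤ bcost c (e j) := by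
    rw [show s j = ∑ k ∈ (univ.filter (g · = j)).map Fin.castSuccEmb, c k by simp [s, hc1]]
    exact sum_le_bcost hc0 fun k hk => by
      obtain ⟨i, hi, rfl⟩ := mem_map.1 hk
      simpa [(mem_filter.1 hi).2] using he i
  have hQ := sum_sq_fiberwise_le g (fun i => Nat.cast_nonneg (a i)) hfiber
  have hQS : ∑ j, s j ^ 2 ≤ S ^ 2 :=
    hs ▸ sum_sq_le_sq_sum_of_nonneg fun j _ => sum_nonneg fun i _ => Nat.cast_nonneg _
  have ht : (t : ℝ) ≠ 0 := by rintro h; rw [h, zero_mul] at hq; linarith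
  have hP0 : 0 ≤ P := by linarith [two_mul_div_pow_four_le_half hS1 hM]
  have key : P * ((∑ j, s j ^ 2) / M ^ 4) ≤ t * q ^ 2 / M ^ 4 + 6 / M ^ 5 :=
    calc P * ((∑ j, s j ^ 2) / M ^ 4) ≤ P * ∑ i, p i.castSucc * bcost c (e (g i)) := by
          gcongr
          simp only [hp1, div_mul_eq_mul_div, ← sum_div]
          exact div_le_div_of_nonneg_right hQ (by positivity)
      _ ≤ γ := hcost
      _ = t * q ^ 2 / M ^ 4 + 6 / M ^ 5 := by rw [hγ, hq]; field_simp
  have := reduction_sum_sq_lt hS1 hM hP (sum_nonneg fun j _ => sq_nonneg _) hQS key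
  simp only [s] at this
  exact_mod_cast this

end Reduction

open Classical in
theorem stmt13 {m : ℕ} (t : ℕ) (ht : 0 < t) (a : Fin m → ℕ) (ha : ∀ i, 0 < a i)
    (S M : ℕ) (hS : S = ∑ i, a i) (hdvd : t ∣ S) (hM : M = 13 * S^2)
    (p c : Fin (m+1) → ℝ)
    (hp1 : ∀ i : Fin m, p i.castSucc = (a i : ℝ) / (M : ℝ)^4)
    (hp2 : p (Fin.last m) = 1 / (M : ℝ)^6)
    (hc1 : ∀ i : Fin m, c i.castSucc = (a i : ℝ))
    (hc2 : c (Fin.last m) = 2 * (M : ℝ))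
    (γ : ℝ) (hγ : γ = (S : ℝ)^2 / ((t : ℝ) * (M : ℝ)^4) + 6 / (M : ℝ)^5)
    (hex : ∃ B : Finset (Fin (m+1) → Bool),
      bcover p B ∧ B.card = t + 2 ∧ bexp p c B ≤ γ) :
    ∃ I : Fin t → Finset (Fin m),
      (∀ i : Fin m, ∃! j, i ∈ I j) ∧ ∀ j, t * ∑ i ∈ I j, a i = S := by
  rcases Nat.eq_zero_or_pos m with rfl | hm
  · exact ⟨fun _ => ∅, fun i => i.elim0, fun j => by simp [hS]⟩
  obtain ⟨B, hB, hcard, hE⟩ := hex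
  obtain ⟨q, hq⟩ := hdvd
  have hSR : (S : ℝ) = ∑ i, (a i : ℝ) := by rw [hS]; push_cast; rfl
  have hS1 : (1 : ℝ) ≤ S := by
    rw [hSR]
    exact (show (1 : ℝ) ≤ a ⟨0, hm⟩ by exact_mod_cast ha _).trans
      (single_le_sum (fun i _ => Nat.cast_nonneg (a i)) (mem_univ _))
  have hMR : (M : ℝ) = 13 * (S : ℝ) ^ 2 := by rw [hM]; push_cast; ring
  have hc : ∀ k, 1 ≤ c k := Fin.lastCases (by rw [hc2]; nlinarith)
    fun i => by rw [hc1]; exact_mod_cast ha i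
  have hP := reduction_one_sub_le_prod ha hSR hS1 hMR hp1 hp2
  obtain ⟨hγP, hγw⟩ := reduction_gamma_lt_weights (P := ∏ k, (1 - p k)) ha hS1 hMR hp1 hc2
    (by linarith [two_mul_div_pow_four_le_half hS1 hMR])
    (hγ ▸ reduction_gamma_lt hS1 hMR (by exact_mod_cast ht))
  obtain ⟨g, e, he, hcost⟩ := exists_fin_assignment hB hcard hE
    (reduction_prob_mem_Ioo ha hSR hS1 hMR hp1 hp2) hc hγP hγw
  have hfib := reduction_fiber_sum_sq_lt hSR hS1 hMR (by exact_mod_cast hq) hp1 hc1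
    (fun k => zero_le_one.trans (hc k)) hP hγ he hcost
  refine ⟨fun j => univ.filter (g · = j), fun i => ⟨g i, by simp, fun j hj => by simp_all⟩,
    fun j => ?_⟩
  rw [hq, eq_of_sum_sq_lt (s := fun j => ∑ i with g i = j, a i)
    (by rw [sum_fiberwise, ← hS, hq, Fintype.card_fin]) (by simpa using hfib) j]
end
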